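/- arXiv:2412.18014 — 3 statements merged into one kernel-verified Lean document; each statement's English description precedes it below -/
import Mathlib

section
/- Let n ≥ 1, x ∈ ℝⁿ, β₁, β₂ > 0 and c ∈ ℝ, and let ψ(z) = φ(β₁ z/√n − c). Then |ψ(d(x, [−1,1]ⁿ)) − ψ(√(Σ_{i=1}^n π_{β₂}(x_i)²))| ≤ 2β₁/β₂. -/
/-!
The logistic function is `1/4`-Lipschitz, and the softplus function satisfies
`max t 0 ≤ log (1 + exp t) ≤ max t 0 + log 2`. Hence each `π_{β₂}(x_i)` lies within `2 log 2 / β₂`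
of the coordinate distance `max (|x_i| - 1) 0`, so by the reverse triangle inequality in `ℓ²` the
two Euclidean norms differ by at most `√n · 2 log 2 / β₂`; the factor `β₁ / √n` cancels the `√n`.
-/

noncomputable section

/-- The logistic function `φ`. -/
def logistic (z : ℝ) : ℝ := Real.exp z / (1 + Real.exp z)

/-- The smooth approximation `π_a` of the distance to `[-1,1]`. -/
def pia (a z : ℝ) : ℝ :=
  (Real.log (1 + Real.exp (a * (z - 1))) + Real.log (1 + Real.exp (a * (-z - 1)))) / a

/-- Euclidean distance from `z` to the cube `[-1,1]ⁿ`. -/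
def cubeDist {n : ℕ} (z : Fin n → ℝ) : ℝ :=
  Real.sqrt (∑ i, max (|z i| - 1) 0 ^ 2)

end

open Real

theorem logistic_eq_sigmoid : logistic = sigmoid := by
  ext z
  rw [logistic, sigmoid_def, exp_neg]
  field_simp
  ring

theorem lipschitzWith_sigmoid : LipschitzWith 4⁻¹ sigmoid := by
  refine lipschitzWith_of_nnnorm_deriv_le differentiable_sigmoid fun x => ?_
  rw [← NNReal.coe_le_coe, coe_nnnorm, deriv_sigmoid, norm_eq_abs, abs_le]
  have := sigmoid_pos x
  have := sigmoid_lt_one x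
  constructor <;> push_cast <;> nlinarith [sq_nonneg (sigmoid x - 2⁻¹)]

theorem abs_sigmoid_sub_le (u v : ℝ) : |sigmoid u - sigmoid v| ≤ |u - v| / 4 := by
  simpa [dist_eq, div_eq_inv_mul] using lipschitzWith_sigmoid.dist_le_mul u v

theorem le_log_one_add_exp (t : ℝ) : max t 0 ≤ log (1 + exp t) := by
  rw [le_log_iff_exp_le (by positivity)]
  rcases max_choice t 0 with h | h <;> rw [h]
  · linarith [exp_pos 0]
  · linarith [exp_pos t, exp_zero]

theorem log_one_add_exp_le (t : ℝ) : log (1 + exp t) ≤ max t 0 + log 2 := by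
  have h : 1 + exp t ≤ 2 * exp (max t 0) := by
    linarith [one_le_exp (le_max_right t 0), exp_le_exp.mpr (le_max_left t 0)]
  calc log (1 + exp t) ≤ log (2 * exp (max t 0)) := log_le_log (by positivity) h
    _ = max t 0 + log 2 := by rw [log_mul two_ne_zero (exp_pos _).ne', log_exp, add_comm]

theorem max_sub_one_add_max_neg_sub_one (z : ℝ) :
    max (z - 1) 0 + max (-z - 1) 0 = max (|z| - 1) 0 := by
  rcases le_total 0 z with hz | hz
  · rw [abs_of_nonneg hz, max_eq_right (by linarith : -z - 1 ≤ 0), add_zero]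
  · rw [abs_of_nonpos hz, max_eq_right (by linarith : z - 1 ≤ 0), zero_add]

theorem abs_pia_sub_le {a : ℝ} (ha : 0 < a) (z : ℝ) :
    |pia a z - max (|z| - 1) 0| ≤ 2 * log 2 / a := by
  have hmax : a * max (|z| - 1) 0 = max (a * (z - 1)) 0 + max (a * (-z - 1)) 0 := by
    rw [← max_sub_one_add_max_neg_sub_one, mul_add, mul_max_of_nonneg _ _ ha.le,
      mul_max_of_nonneg _ _ ha.le, mul_zero]
  have hsub : pia a z - max (|z| - 1) 0 =
      (log (1 + exp (a * (z - 1))) + log (1 + exp (a * (-z - 1))) -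
        a * max (|z| - 1) 0) / a := by
    rw [pia]; field_simp
  rw [hsub, abs_div, abs_of_pos ha, hmax]
  gcongr
  rw [abs_le]
  constructor <;> linarith [le_log_one_add_exp (a * (z - 1)), le_log_one_add_exp (a * (-z - 1)),
    log_one_add_exp_le (a * (z - 1)), log_one_add_exp_le (a * (-z - 1)), log_nonneg one_le_two]

section EuclideanNorm

variable {ι : Type*} [Fintype ι]

theorem abs_sqrt_sum_sq_sub_sqrt_sum_sq_le (f g : ι → ℝ) :
    |√(∑ i, f i ^ 2) - √(∑ i, g i ^ 2)| ≤ √(∑ i, (f i - g i) ^ 2) := by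
  have hnorm (h : ι → ℝ) : ‖WithLp.toLp 2 h‖ = √(∑ i, h i ^ 2) := by
    simp [EuclideanSpace.norm_eq]
  rw [← hnorm f, ← hnorm g]
  calc _ ≤ ‖WithLp.toLp 2 f - WithLp.toLp 2 g‖ := abs_norm_sub_norm_le _ _
    _ = _ := by rw [← WithLp.toLp_sub, hnorm]; rfl

theorem sqrt_sum_sq_le_of_abs_le {f : ι → ℝ} {ε : ℝ} (h : ∀ i, |f i| ≤ ε) :
    √(∑ i, f i ^ 2) ≤ √(Fintype.card ι) * ε := by
  rcases isEmpty_or_nonempty ι with _ | ⟨⟨i₀⟩⟩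
  · simp
  have hε : 0 ≤ ε := (abs_nonneg _).trans (h i₀)
  calc √(∑ i, f i ^ 2) ≤ √(∑ _i : ι, ε ^ 2) :=
        sqrt_le_sqrt <| Finset.sum_le_sum fun i _ => sq_le_sq' (abs_le.mp (h i)).1 (abs_le.mp (h i)).2
    _ = √(Fintype.card ι) * ε := by
        rw [Finset.sum_const, Finset.card_univ, nsmul_eq_mul, sqrt_mul (Nat.cast_nonneg _),
          sqrt_sq hε]

end EuclideanNorm

theorem stmt_7_general (n : ℕ) (x : Fin n → ℝ) (β₁ β₂ c : ℝ)
    (h1 : 0 < β₁) (h2 : 0 < β₂) :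
    |logistic (β₁ * cubeDist x / Real.sqrt n - c) -
        logistic (β₁ * Real.sqrt (∑ i, pia β₂ (x i) ^ 2) / Real.sqrt n - c)| ≤
      2 * β₁ / β₂ := by
  set D := cubeDist x
  set P := √(∑ i, pia β₂ (x i) ^ 2)
  have hclose : |D - P| ≤ √n * (2 * log 2 / β₂) := by
    refine (abs_sqrt_sum_sq_sub_sqrt_sum_sq_le _ _).trans ?_
    simpa using sqrt_sum_sq_le_of_abs_le (f := fun i => max (|x i| - 1) 0 - pia β₂ (x i))
      fun i => (abs_sub_comm _ _).trans_le (abs_pia_sub_le h2 (x i))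
  have hlog : log 2 < 1 := log_two_lt_d9.trans (by norm_num)
  rw [logistic_eq_sigmoid]
  calc _ ≤ |β₁ * D / √n - c - (β₁ * P / √n - c)| / 4 := abs_sigmoid_sub_le _ _
    _ = β₁ * (|D - P| / √n) / 4 := by
        rw [show β₁ * D / √n - c - (β₁ * P / √n - c) = β₁ * ((D - P) / √n) by ring,
          abs_mul, abs_div, abs_of_pos h1, abs_of_nonneg (sqrt_nonneg _)]
    _ ≤ β₁ * (2 * log 2 / β₂) / 4 := by
        gcongr β₁ * ?_ / 4
        exact div_le_of_le_mul₀ (sqrt_nonneg _) (by positivity) (hclose.trans_eq (mul_comm _ _))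
    _ ≤ 2 * β₁ / β₂ := by
        rw [show β₁ * (2 * log 2 / β₂) / 4 = β₁ / β₂ * (log 2 / 2) by ring,
          show 2 * β₁ / β₂ = β₁ / β₂ * 2 by ring]
        gcongr
        linarith

/-- Replacing the distance to the cube by its smooth `π_{β₂}`-approximation inside
`ψ(z) = φ(β₁ z/√n - c)` changes the value by at most `2β₁/β₂`. -/
theorem stmt_7 (n : ℕ) (hn : 1 ≤ n) (x : Fin n → ℝ) (β₁ β₂ c : ℝ)
    (h1 : 0 < β₁) (h2 : 0 < β₂) :
    |logistic (β₁ * cubeDist x / Real.sqrt n - c) -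
        logistic (β₁ * Real.sqrt (∑ i, pia β₂ (x i) ^ 2) / Real.sqrt n - c)| ≤
      2 * β₁ / β₂ :=
  stmt_7_general n x β₁ β₂ c h1 h2
end

section
/- Let X ∼ GOE(n). Let p be an LDP in dimension n of total degree at most Δ, and let S ⊆ {1,…,n} satisfy S ⊆ p. Suppose that for every exponent α with c_{p,α} ≠ 0, either x^α is connected, or α = α₁ + α₂ for exponent matrices α₁, α₂ with disjoint supports such that x^{α₁} and x^{α₂} are both connected and neither α₁ nor α₂ satisfies 'G_α is a tree and all entries ≤ 2'. Then there exists a constant c = c(Δ), independent of n, such that |E[p(X) − p^Tr(X)]| ≤ c ‖p‖ / n^{|S|}. -/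
open MeasureTheory ProbabilityTheory Filter
open scoped ENNReal NNReal

noncomputable section

/-- Index type of the variables `x_{ij}`, `1 ≤ i < j ≤ n`. -/
abbrev Edge (n : ℕ) : Type := {e : Fin n × Fin n // e.1 < e.2}

/-- A (low-degree) polynomial in the variables `x_{ij}`, `1 ≤ i < j ≤ n`. -/
abbrev LDP (n : ℕ) : Type := MvPolynomial (Edge n) ℝ

/-- `‖p‖ = max_α |c_{p,α}|`. -/
def LDPnorm {n : ℕ} (p : LDP n) : ℝ :=
  ⨆ α : Edge n →₀ ℕ, |MvPolynomial.coeff α p|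

/-- Evaluation of an LDP at the entries `(M i j)_{i<j}` of a matrix. -/
def evalMat {n : ℕ} (p : LDP n) (M : Matrix (Fin n) (Fin n) ℝ) : ℝ :=
  MvPolynomial.eval (fun e : Edge n => M e.val.1 e.val.2) p

/-- The vertex set `V_α` of the factor graph of an exponent `α`. -/
def vertexSet {n : ℕ} (α : Edge n →₀ ℕ) : Set (Fin n) :=
  {k | ∃ e : Edge n, α e ≠ 0 ∧ (e.val.1 = k ∨ e.val.2 = k)}

/-- The factor graph `G_α`. -/
def graphOf {n : ℕ} (α : Edge n →₀ ℕ) : SimpleGraph (Fin n) where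
  Adj i j := (∃ h : i < j, α ⟨(i, j), h⟩ ≠ 0) ∨ (∃ h : j < i, α ⟨(j, i), h⟩ ≠ 0)
  symm := ⟨by intro i j h; exact h.symm⟩
  loopless := ⟨by intro i h; rcases h with ⟨h, _⟩ | ⟨h, _⟩ <;> exact absurd h (lt_irrefl i)⟩

/-- `x^α` is connected: all vertices of `V_α` are mutually reachable in `G_α`
(vacuously true for the constant monomial). -/
def ConnectedExp {n : ℕ} (α : Edge n →₀ ℕ) : Prop :=
  ∀ u ∈ vertexSet α, ∀ v ∈ vertexSet α, (graphOf α).Reachable u v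

/-- `G_α` is a tree. -/
def IsTreeExp {n : ℕ} (α : Edge n →₀ ℕ) : Prop :=
  ConnectedExp α ∧ (graphOf α).IsAcyclic

/-- every entry of `α` is at most 2. -/
def MaxTwo {n : ℕ} (α : Edge n →₀ ℕ) : Prop := ∀ e : Edge n, α e ≤ 2

/-- `G_α` a tree and all entries of `α` at most `2`. -/
def IsTree2 {n : ℕ} (α : Edge n →₀ ℕ) : Prop := IsTreeExp α ∧ MaxTwo α

/-- `‖α‖₁`. -/
def expDeg {n : ℕ} (α : Edge n →₀ ℕ) : ℕ := α.sum fun _ k => k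

/-- `p ∈ T_{n,2,Δ}`. -/
def MemT2 {n : ℕ} (Δ : ℕ) (p : LDP n) : Prop :=
  ∀ α : Edge n →₀ ℕ, MvPolynomial.coeff α p ≠ 0 → IsTree2 α ∧ expDeg α ≤ Δ

/-- `p` is a connected LDP. -/
def ConnectedLDP {n : ℕ} (p : LDP n) : Prop :=
  ∀ α : Edge n →₀ ℕ, MvPolynomial.coeff α p ≠ 0 → ConnectedExp α

/-- `p` contains node `i` (the constant monomial contains every node). -/
def ContainsNode {n : ℕ} (i : Fin n) (p : LDP n) : Prop :=
  ∀ α : Edge n →₀ ℕ, MvPolynomial.coeff α p ≠ 0 → α = 0 ∨ i ∈ vertexSet α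

/-- `S ⊆ p` (the constant monomial contains every node). -/
def ContainsSet {n : ℕ} (S : Finset (Fin n)) (p : LDP n) : Prop :=
  ∀ α : Edge n →₀ ℕ, MvPolynomial.coeff α p ≠ 0 → α = 0 ∨ (S : Set (Fin n)) ⊆ vertexSet α

open scoped Classical in
/-- The tree projection `p^Tr`. -/
def treeProj {n : ℕ} (p : LDP n) : LDP n :=
  ∑ α ∈ p.support, if IsTree2 α then MvPolynomial.monomial α (MvPolynomial.coeff α p) else 0

instance matrixMeasurableSpace {m n α : Type*} [MeasurableSpace α] :
    MeasurableSpace (Matrix m n α) :=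
  inferInstanceAs (MeasurableSpace (m → n → α))

/-- Build a symmetric zero-diagonal matrix out of upper-triangular entries. -/
def symmetrize {n : ℕ} (g : Edge n → ℝ) : Matrix (Fin n) (Fin n) ℝ :=
  Matrix.of fun i j =>
    if h : i < j then g ⟨(i, j), h⟩ else if h' : j < i then g ⟨(j, i), h'⟩ else 0

/-- The GOE(n) distribution, as a measure on symmetric zero-diagonal matrices:
i.i.d. `N(0, 1/n)` entries above the diagonal. -/
def GOEMeasure (n : ℕ) : Measure (Matrix (Fin n) (Fin n) ℝ) :=
  (Measure.pi fun _ : Edge n => gaussianReal 0 (n : ℝ≥0)⁻¹).map symmetrize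

/-- The law of `-(B - d/n)/√(d(1-d/n))`, `B ∼ Bernoulli(d/n)`. -/
def hatGEntry (n : ℕ) (d : ℝ) : Measure ℝ :=
  (Real.toNNReal (1 - d / n)) • Measure.dirac ((d / n) / Real.sqrt (d * (1 - d / n)))
    + (Real.toNNReal (d / n)) • Measure.dirac (-(1 - d / n) / Real.sqrt (d * (1 - d / n)))

instance hatGEntry.isFiniteMeasure (n : ℕ) (d : ℝ) : IsFiniteMeasure (hatGEntry n d) := by
  unfold hatGEntry; infer_instance

/-- The distribution `Ĝ(n, d/n)` of the centered rescaled adjacency matrix. -/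
def hatGMeasure (n : ℕ) (d : ℝ) : Measure (Matrix (Fin n) (Fin n) ℝ) :=
  (Measure.pi fun _ : Edge n => hatGEntry n d).map symmetrize

/-- `p(M) = (p_1(M),…,p_n(M))`. -/
def pEval {n : ℕ} (p : Fin n → LDP n) (M : Matrix (Fin n) (Fin n) ℝ) : Fin n → ℝ :=
  fun i => evalMat (p i) M

/-- `vᵀ M v`. -/
def quadForm {n : ℕ} (M : Matrix (Fin n) (Fin n) ℝ) (v : Fin n → ℝ) : ℝ :=
  dotProduct v (M.mulVec v)

end

/-!
Expand `p - p^Tr` in monomials. By independence `E[x^α] = ∏ E[X_{ij}^{α_{ij}}]`, which vanishes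
unless every entry of `α` is even, and is then `O_Δ(n^{-‖α‖₁/2})`. For an even exponent whose
graph is connected but not a tree with entries `≤ 2`, one has `2|V_α| ≤ ‖α‖₁`: either `G_α` has a
cycle, so `|V_α| ≤ |E_α|`, or some entry is at least `4`, which pays for the one vertex a tree has
in excess of its edges. The splitting hypothesis extends this to every surviving monomial, so each
contributes `O_Δ(‖p‖ n^{-|V_α|})`. Grouping exponents by their vertex set `W ⊇ S`, each `W`
carries `O_Δ(1)` exponents and there are at most `n^j` sets with `|W \ S| = j`, which leaves
`O_Δ(‖p‖ n^{-|S|})`.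
-/

namespace SimpleGraph

variable {V : Type*} {G : SimpleGraph V}

lemma Connected.card_vert_le_card_edgeSet_of_not_isAcyclic [Finite V] (hG : G.Connected)
    (hcyc : ¬G.IsAcyclic) : Nat.card V ≤ Nat.card G.edgeSet := by
  have hne : Nat.card G.edgeSet + 1 ≠ Nat.card V :=
    fun h ↦ hcyc (isTree_iff_connected_and_card.2 ⟨hG, h⟩).isAcyclic
  have := hG.card_vert_le_card_edgeSet_add_one
  omega

lemma Walk.support_subset_support {u v : V} (w : G.Walk u v) (hv : v ∈ G.support) :
    ∀ x ∈ w.support, x ∈ G.support := by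
  induction w with
  | nil => simpa using hv
  | cons h w ih =>
    simp only [Walk.support_cons, List.mem_cons, forall_eq_or_imp]
    exact ⟨h.mem_support_left, ih hv⟩

lemma connected_induce_support (hne : G.support.Nonempty)
    (hreach : ∀ u ∈ G.support, ∀ v ∈ G.support, G.Reachable u v) :
    (G.induce G.support).Connected := by
  have : Nonempty G.support := hne.to_subtype
  refine Connected.mk fun ⟨u, hu⟩ ⟨v, hv⟩ ↦ ?_
  obtain ⟨w⟩ := hreach u hu v hv
  exact ⟨w.induce _ (w.support_subset_support hv)⟩

lemma not_isAcyclic_induce_support (hcyc : ¬G.IsAcyclic) :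
    ¬(G.induce G.support).IsAcyclic := by
  simp only [IsAcyclic, not_forall, not_not] at hcyc ⊢
  obtain ⟨v, c, hc⟩ := hcyc
  have hv : v ∈ G.support := by
    cases c with
    | nil => exact absurd rfl hc.ne_nil
    | cons h _ => exact h.mem_support_left
  refine ⟨_, c.induce _ (c.support_subset_support hv), ?_⟩
  rw [← Walk.isCycle_map_iff_of_injective Subtype.val_injective (f := (Embedding.induce _).toHom),
    Walk.map_induce]
  exact hc

lemma ncard_edgeSet_induce_support [Finite V] :
    (G.induce G.support).edgeSet.ncard = G.edgeSet.ncard := by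
  classical
  have := Fintype.ofFinite V
  simp only [← Nat.card_coe_set_eq, Nat.card_eq_fintype_card, ← edgeFinset_card]
  exact card_edgeFinset_induce_support

lemma ncard_support_le_ncard_edgeSet_add_one [Finite V]
    (hreach : ∀ u ∈ G.support, ∀ v ∈ G.support, G.Reachable u v) :
    G.support.ncard ≤ G.edgeSet.ncard + 1 := by
  rcases G.support.eq_empty_or_nonempty with h | hne
  · simp [h]
  rw [← ncard_edgeSet_induce_support]
  exact (connected_induce_support hne hreach).card_vert_le_card_edgeSet_add_one

lemma ncard_support_le_ncard_edgeSet [Finite V]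
    (hreach : ∀ u ∈ G.support, ∀ v ∈ G.support, G.Reachable u v) (hcyc : ¬G.IsAcyclic) :
    G.support.ncard ≤ G.edgeSet.ncard := by
  rcases G.support.eq_empty_or_nonempty with h | hne
  · simp [h]
  rw [← ncard_edgeSet_induce_support]
  exact (connected_induce_support hne hreach).card_vert_le_card_edgeSet_of_not_isAcyclic
    (not_isAcyclic_induce_support hcyc)

end SimpleGraph

section Exponent

open Finset

variable {n : ℕ} {α α₁ α₂ : Edge n →₀ ℕ}

lemma expDeg_eq_degree (α : Edge n →₀ ℕ) : expDeg α = α.degree := rfl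

lemma vertexSet_eq_support (α : Edge n →₀ ℕ) : vertexSet α = (graphOf α).support := by
  ext k
  constructor
  · rintro ⟨⟨⟨a, b⟩, hab⟩, hne, rfl | rfl⟩
    exacts [⟨b, Or.inl ⟨hab, hne⟩⟩, ⟨a, Or.inr ⟨hab, hne⟩⟩]
  · rintro ⟨w, ⟨h, hne⟩ | ⟨h, hne⟩⟩
    exacts [⟨_, hne, Or.inl rfl⟩, ⟨_, hne, Or.inr rfl⟩]

lemma ncard_edgeSet_graphOf_le (α : Edge n →₀ ℕ) : (graphOf α).edgeSet.ncard ≤ #α.support := by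
  have hsub : (graphOf α).edgeSet ⊆ (fun e : Edge n ↦ s(e.val.1, e.val.2)) '' α.support := by
    intro e he
    induction e using Sym2.ind with
    | _ a b =>
      rcases he with ⟨h, hne⟩ | ⟨h, hne⟩
      · exact ⟨⟨(a, b), h⟩, Finsupp.mem_support_iff.2 hne, rfl⟩
      · exact ⟨⟨(b, a), h⟩, Finsupp.mem_support_iff.2 hne, Sym2.eq_swap⟩
  calc (graphOf α).edgeSet.ncard
      ≤ ((fun e : Edge n ↦ s(e.val.1, e.val.2)) '' α.support).ncard := Set.ncard_le_ncard hsub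
    _ ≤ (α.support : Set (Edge n)).ncard := Set.ncard_image_le (Set.toFinite _)
    _ = #α.support := Set.ncard_coe_finset _

lemma ConnectedExp.ncard_vertexSet_le (h : ConnectedExp α) :
    (vertexSet α).ncard ≤ #α.support + 1 := by
  rw [ConnectedExp, vertexSet_eq_support] at h
  rw [vertexSet_eq_support]
  exact (SimpleGraph.ncard_support_le_ncard_edgeSet_add_one h).trans
    (by have := ncard_edgeSet_graphOf_le α; omega)

lemma ConnectedExp.ncard_vertexSet_le_of_not_isAcyclic (h : ConnectedExp α)
    (hcyc : ¬(graphOf α).IsAcyclic) : (vertexSet α).ncard ≤ #α.support := by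
  rw [ConnectedExp, vertexSet_eq_support] at h
  rw [vertexSet_eq_support]
  exact (SimpleGraph.ncard_support_le_ncard_edgeSet h hcyc).trans (ncard_edgeSet_graphOf_le α)

lemma expDeg_eq_two_mul_card_support_add (h2 : ∀ e ∈ α.support, 2 ≤ α e) :
    expDeg α = 2 * #α.support + ∑ e ∈ α.support, (α e - 2) := by
  rw [expDeg_eq_degree, Finsupp.degree_apply, mul_comm, ← smul_eq_mul, ← sum_const,
    ← sum_add_distrib]
  exact sum_congr rfl fun e he ↦ by have := h2 e he; omega

lemma ConnectedExp.two_mul_ncard_vertexSet_le (hconn : ConnectedExp α)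
    (heven : ∀ e, Even (α e)) (hnt : ¬IsTree2 α) : 2 * (vertexSet α).ncard ≤ expDeg α := by
  have h2 : ∀ e ∈ α.support, 2 ≤ α e := fun e he ↦ by
    obtain ⟨m, hm⟩ := heven e
    have := Finsupp.mem_support_iff.1 he
    omega
  rw [expDeg_eq_two_mul_card_support_add h2]
  by_cases hmax : MaxTwo α
  · have := hconn.ncard_vertexSet_le_of_not_isAcyclic fun hac ↦ hnt ⟨⟨hconn, hac⟩, hmax⟩
    omega
  obtain ⟨e₀, he₀⟩ : ∃ e₀, 2 < α e₀ := by simpa [MaxTwo] using hmax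
  have h4 : 4 ≤ α e₀ := by obtain ⟨m, hm⟩ := heven e₀; omega
  have hsum : α e₀ - 2 ≤ ∑ e ∈ α.support, (α e - 2) :=
    single_le_sum (f := fun e ↦ α e - 2) (fun _ _ ↦ Nat.zero_le _)
      (Finsupp.mem_support_iff.2 (by omega))
  have := hconn.ncard_vertexSet_le
  omega

lemma even_apply_left_of_disjoint (hdisj : Disjoint α₁.support α₂.support)
    (heven : ∀ e, Even ((α₁ + α₂) e)) (e : Edge n) : Even (α₁ e) := by
  by_cases h₂ : α₂ e = 0
  · simpa [h₂] using heven e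
  · have : α₁ e = 0 := Finsupp.notMem_support_iff.1 fun h₁ ↦
      disjoint_left.1 hdisj h₁ (Finsupp.mem_support_iff.2 h₂)
    simp [this]

lemma vertexSet_add_subset (α₁ α₂ : Edge n →₀ ℕ) :
    vertexSet (α₁ + α₂) ⊆ vertexSet α₁ ∪ vertexSet α₂ := by
  rintro k ⟨e, hne, he⟩
  by_cases h₁ : α₁ e = 0
  · exact Or.inr ⟨e, by simpa [h₁] using hne, he⟩
  · exact Or.inl ⟨e, h₁, he⟩

def SplitsIntoConnectedNonTrees (α : Edge n →₀ ℕ) : Prop :=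
  ∃ α₁ α₂ : Edge n →₀ ℕ, α = α₁ + α₂ ∧ Disjoint α₁.support α₂.support ∧
    ConnectedExp α₁ ∧ ConnectedExp α₂ ∧ ¬IsTree2 α₁ ∧ ¬IsTree2 α₂

lemma SplitsIntoConnectedNonTrees.two_mul_ncard_vertexSet_le (hα : SplitsIntoConnectedNonTrees α)
    (heven : ∀ e, Even (α e)) : 2 * (vertexSet α).ncard ≤ expDeg α := by
  obtain ⟨α₁, α₂, rfl, hdisj, hc₁, hc₂, ht₁, ht₂⟩ := hα
  have h₁ := hc₁.two_mul_ncard_vertexSet_le (even_apply_left_of_disjoint hdisj heven) ht₁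
  have h₂ := hc₂.two_mul_ncard_vertexSet_le
    (even_apply_left_of_disjoint hdisj.symm (add_comm α₁ α₂ ▸ heven)) ht₂
  have hV := (Set.ncard_le_ncard (vertexSet_add_subset α₁ α₂)).trans (Set.ncard_union_le _ _)
  rw [expDeg_eq_degree, map_add, ← expDeg_eq_degree, ← expDeg_eq_degree]
  omega

lemma two_mul_ncard_vertexSet_le_expDeg (heven : ∀ e, Even (α e)) (hnt : ¬IsTree2 α)
    (hα : ConnectedExp α ∨ SplitsIntoConnectedNonTrees α) :
    2 * (vertexSet α).ncard ≤ expDeg α :=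
  hα.elim (·.two_mul_ncard_vertexSet_le heven hnt) (·.two_mul_ncard_vertexSet_le heven)

lemma isTree2_zero : IsTree2 (0 : Edge n →₀ ℕ) := by
  have hV : vertexSet (0 : Edge n →₀ ℕ) = ∅ := by simp [vertexSet]
  have hG : graphOf (0 : Edge n →₀ ℕ) = ⊥ := by ext; simp [graphOf]
  exact ⟨⟨by simp [ConnectedExp, hV], hG ▸ SimpleGraph.isAcyclic_bot⟩, by simp [MaxTwo]⟩

end Exponent

section GaussianMoments

open MeasureTheory ProbabilityTheory Finset

lemma integrable_pow_gaussianReal (μ : ℝ) (v : ℝ≥0) (k : ℕ) :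
    Integrable (fun x : ℝ ↦ x ^ k) (gaussianReal μ v) :=
  integrable_pow_of_mem_interior_integrableExpSet (X := fun x ↦ x) (by simp) k

lemma integral_pow_gaussianReal_of_odd (v : ℝ≥0) {k : ℕ} (hk : Odd k) :
    ∫ x, x ^ k ∂gaussianReal 0 v = 0 := by
  have h := integral_map (μ := gaussianReal 0 v) (φ := fun x ↦ -x) (f := fun x ↦ x ^ k)
    (by fun_prop) (by fun_prop)
  rw [gaussianReal_map_neg, neg_zero] at h
  simp only [hk.neg_pow, integral_neg] at h
  linarith

noncomputable def stdGaussianMoment (k : ℕ) : ℝ := ∫ x, x ^ k ∂gaussianReal 0 1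

lemma integral_pow_gaussianReal (v : ℝ≥0) (k : ℕ) :
    ∫ x, x ^ k ∂gaussianReal 0 v = √v ^ k * stdGaussianMoment k := by
  have hmap : (gaussianReal 0 1).map (fun x ↦ √v * x) = gaussianReal 0 v := by
    rw [gaussianReal_map_const_mul, mul_zero]
    congr
    ext
    simp [Real.sq_sqrt v.coe_nonneg]
  rw [← hmap, integral_map (by fun_prop) (by fun_prop)]
  simp_rw [mul_pow]
  exact integral_const_mul _ _

noncomputable def momentBound (Δ : ℕ) : ℝ := 1 + ∑ k ∈ range (Δ + 1), |stdGaussianMoment k|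

lemma one_le_momentBound (Δ : ℕ) : 1 ≤ momentBound Δ :=
  le_add_of_nonneg_right (sum_nonneg fun _ _ ↦ abs_nonneg _)

lemma abs_integral_pow_gaussianReal_le (v : ℝ≥0) {k Δ : ℕ} (hk : k ≤ Δ) :
    |∫ x, x ^ k ∂gaussianReal 0 v| ≤ √v ^ k * momentBound Δ := by
  rw [integral_pow_gaussianReal, abs_mul, abs_of_nonneg (by positivity)]
  gcongr
  exact (single_le_sum (f := fun k ↦ |stdGaussianMoment k|) (fun _ _ ↦ abs_nonneg _)
    (mem_range.2 (Nat.lt_succ_of_le hk))).trans (le_add_of_nonneg_left zero_le_one)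

lemma abs_prod_integral_pow_gaussianReal_le {ι : Type*} [Fintype ι] (v : ℝ≥0) {Δ : ℕ}
    (α : ι →₀ ℕ) (hα : α.degree ≤ Δ) :
    |∏ i, ∫ x, x ^ α i ∂gaussianReal 0 v| ≤ momentBound Δ ^ Δ * √v ^ α.degree := by
  have hsupp : #α.support ≤ Δ := by
    refine le_trans ?_ hα
    simpa [Finsupp.degree_apply] using card_nsmul_le_sum α.support α 1 fun i hi ↦
      Nat.one_le_iff_ne_zero.2 (Finsupp.mem_support_iff.1 hi)
  rw [← prod_subset (subset_univ α.support) fun i _ hi ↦ by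
    simp [Finsupp.notMem_support_iff.1 hi], abs_prod]
  calc ∏ i ∈ α.support, |∫ x, x ^ α i ∂gaussianReal 0 v|
      ≤ ∏ i ∈ α.support, (√v ^ α i * momentBound Δ) :=
        prod_le_prod (fun _ _ ↦ abs_nonneg _) fun i _ ↦
          abs_integral_pow_gaussianReal_le v ((Finsupp.le_degree i α).trans hα)
    _ = momentBound Δ ^ #α.support * √v ^ α.degree := by
        rw [prod_mul_distrib, prod_const, prod_pow_eq_pow_sum, Finsupp.degree_apply, mul_comm]
    _ ≤ momentBound Δ ^ Δ * √v ^ α.degree := by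
        gcongr
        exact one_le_momentBound Δ

end GaussianMoments

section Expectation

open MeasureTheory ProbabilityTheory Finset

lemma integral_eval_measurePi {ι : Type*} [Fintype ι] (μ : ι → Measure ℝ)
    [∀ i, SigmaFinite (μ i)] (hint : ∀ i k, Integrable (fun x : ℝ ↦ x ^ k) (μ i))
    (q : MvPolynomial ι ℝ) :
    ∫ g, MvPolynomial.eval g q ∂Measure.pi μ =
      ∑ α ∈ q.support, q.coeff α * ∏ i, ∫ x, x ^ α i ∂μ i := by
  simp_rw [MvPolynomial.eval_eq']
  rw [integral_finsetSum _ fun α _ ↦ (Integrable.fintype_prod fun i ↦ hint i (α i)).const_mul _]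
  refine sum_congr rfl fun α _ ↦ ?_
  rw [integral_const_mul, integral_fintype_prod_eq_prod (f := fun i (x : ℝ) ↦ x ^ α i)]

variable {n : ℕ}

lemma measurable_symmetrize : Measurable (symmetrize (n := n)) := by
  refine measurable_pi_lambda _ fun i ↦ measurable_pi_lambda _ fun j ↦ ?_
  simp only [symmetrize, Matrix.of_apply]
  split_ifs
  exacts [measurable_pi_apply _, measurable_pi_apply _, measurable_const]

lemma measurable_evalMat (q : LDP n) : Measurable (evalMat q) :=
  (MvPolynomial.continuous_eval q).measurable.comp <|
    measurable_pi_lambda _ fun e ↦ (measurable_pi_apply e.val.2).comp (measurable_pi_apply e.val.1)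

lemma evalMat_symmetrize (q : LDP n) (g : Edge n → ℝ) :
    evalMat q (symmetrize g) = MvPolynomial.eval g q := by
  have hg : (fun e : Edge n ↦ symmetrize g e.val.1 e.val.2) = g := by
    funext e
    simp [symmetrize, e.2]
  rw [evalMat, hg]

lemma integral_evalMat_GOEMeasure (q : LDP n) :
    ∫ M, evalMat q M ∂GOEMeasure n =
      ∑ α ∈ q.support, q.coeff α * ∏ e, ∫ x, x ^ α e ∂gaussianReal 0 (n : ℝ≥0)⁻¹ := by
  rw [GOEMeasure, integral_map measurable_symmetrize.aemeasurable
    (measurable_evalMat q).aestronglyMeasurable]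
  simp_rw [evalMat_symmetrize]
  exact integral_eval_measurePi _ (fun _ ↦ integrable_pow_gaussianReal 0 _) q

end Expectation

section TreeProjection

open Finset MvPolynomial

variable {n : ℕ}

open scoped Classical in
lemma coeff_treeProj (p : LDP n) (α : Edge n →₀ ℕ) :
    (treeProj p).coeff α = if IsTree2 α then p.coeff α else 0 := by
  simp only [treeProj, coeff_sum, apply_ite (coeff α), coeff_monomial, coeff_zero]
  rw [sum_eq_single α (fun β _ hβ ↦ by simp [hβ]) fun hα ↦ by simp [notMem_support_iff.1 hα]]
  simp

lemma mem_support_sub_treeProj {p : LDP n} {α : Edge n →₀ ℕ} :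
    α ∈ (p - treeProj p).support ↔ α ∈ p.support ∧ ¬IsTree2 α := by
  classical
  by_cases h : IsTree2 α <;> simp [coeff_treeProj, h]

lemma totalDegree_sub_treeProj_le (p : LDP n) : (p - treeProj p).totalDegree ≤ p.totalDegree :=
  totalDegree_le_of_support_subset fun _ hα ↦ (mem_support_sub_treeProj.1 hα).1

lemma abs_coeff_le_LDPnorm (p : LDP n) (α : Edge n →₀ ℕ) : |p.coeff α| ≤ LDPnorm p := by
  refine le_ciSup (f := fun α ↦ |p.coeff α|) ⟨∑ β ∈ p.support, |p.coeff β|, ?_⟩ α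
  rintro _ ⟨β, rfl⟩
  by_cases hβ : β ∈ p.support
  · exact single_le_sum (f := fun β ↦ |p.coeff β|) (fun _ _ ↦ abs_nonneg _) hβ
  · simpa [notMem_support_iff.1 hβ] using sum_nonneg fun _ _ ↦ abs_nonneg _

lemma LDPnorm_nonneg (p : LDP n) : 0 ≤ LDPnorm p :=
  Real.iSup_nonneg fun _ ↦ abs_nonneg _

lemma abs_coeff_sub_treeProj_le (p : LDP n) (α : Edge n →₀ ℕ) :
    |(p - treeProj p).coeff α| ≤ LDPnorm p := by
  classical
  by_cases h : IsTree2 α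
  · simpa [coeff_treeProj, h] using LDPnorm_nonneg p
  · simpa [coeff_treeProj, h] using abs_coeff_le_LDPnorm p α

end TreeProjection

section Counting

open Finset

lemma card_le_pow_of_support_subset {ι : Type*} [DecidableEq ι] (s : Finset ι) {Δ : ℕ}
    (A : Finset (ι →₀ ℕ)) (hA : ∀ α ∈ A, α.support ⊆ s ∧ ∀ i, α i ≤ Δ) :
    #A ≤ (Δ + 1) ^ #s := by
  set b := Finsupp.indicator s fun _ _ ↦ Δ
  have hAb : A ⊆ Iic b := fun α hα ↦ mem_Iic.2 fun i ↦ by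
    by_cases hi : i ∈ s
    · simpa [b, Finsupp.indicator_apply, hi] using (hA α hα).2 i
    · simp [Finsupp.notMem_support_iff.1 fun h ↦ hi ((hA α hα).1 h)]
  calc #A ≤ #(Iic b) := card_le_card hAb
    _ = (Δ + 1) ^ #b.support := by
        rw [Finsupp.card_Iic, ← prod_const]
        refine prod_congr rfl fun i hi ↦ ?_
        rw [Nat.card_Iic, Finsupp.indicator_apply,
          dif_pos (Finsupp.support_indicator_subset _ _ hi)]
    _ ≤ (Δ + 1) ^ #s := Nat.pow_le_pow_right (Nat.succ_pos Δ)
        (card_le_card (Finsupp.support_indicator_subset _ _))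

lemma choose_mul_inv_pow_le_one (n j : ℕ) : (n.choose j : ℝ) * ((n : ℝ)⁻¹) ^ j ≤ 1 :=
  calc (n.choose j : ℝ) * ((n : ℝ)⁻¹) ^ j ≤ (n : ℝ) ^ j * ((n : ℝ)⁻¹) ^ j := by
        gcongr
        exact_mod_cast Nat.choose_le_pow n j
    _ = ((n : ℝ) * (n : ℝ)⁻¹) ^ j := (mul_pow _ _ _).symm
    _ ≤ 1 := by
        rcases eq_or_ne n 0 with rfl | hn
        · rcases j with _ | j <;> simp
        · simp [hn]

lemma sum_inv_pow_card_le {n Δ : ℕ} (𝒯 : Finset (Finset (Fin n))) (h𝒯 : ∀ T ∈ 𝒯, #T ≤ Δ) :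
    ∑ T ∈ 𝒯, ((n : ℝ)⁻¹) ^ #T ≤ Δ + 1 := by
  rw [← sum_fiberwise_of_maps_to (g := card) (t := range (Δ + 1))
    fun T hT ↦ mem_range.2 (Nat.lt_succ_of_le (h𝒯 T hT))]
  calc ∑ j ∈ range (Δ + 1), ∑ T ∈ 𝒯 with #T = j, ((n : ℝ)⁻¹) ^ #T
      ≤ ∑ j ∈ range (Δ + 1), (n.choose j : ℝ) * ((n : ℝ)⁻¹) ^ j := by
        refine sum_le_sum fun j _ ↦ ?_
        rw [sum_congr rfl fun T hT ↦ by rw [(mem_filter.1 hT).2], sum_const, nsmul_eq_mul]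
        gcongr
        have := card_powersetCard j (univ : Finset (Fin n))
        rw [card_univ, Fintype.card_fin] at this
        exact_mod_cast this ▸ card_le_card fun T hT ↦
          mem_powersetCard.2 ⟨subset_univ T, (mem_filter.1 hT).2⟩
    _ ≤ ∑ _j ∈ range (Δ + 1), (1 : ℝ) := sum_le_sum fun j _ ↦ choose_mul_inv_pow_le_one n j
    _ = Δ + 1 := by simp

lemma sum_inv_pow_card_le_of_subset {n Δ : ℕ} (S : Finset (Fin n)) (𝒲 : Finset (Finset (Fin n)))
    (hS : ∀ W ∈ 𝒲, S ⊆ W) (hΔ : ∀ W ∈ 𝒲, #W ≤ Δ) :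
    ∑ W ∈ 𝒲, ((n : ℝ)⁻¹) ^ #W ≤ (Δ + 1) * ((n : ℝ)⁻¹) ^ #S := by
  have hinj : Set.InjOn (· \ S) 𝒲 := fun W₁ h₁ W₂ h₂ h ↦ by
    rw [← sdiff_union_of_subset (hS W₁ h₁), ← sdiff_union_of_subset (hS W₂ h₂)]
    exact congrArg (· ∪ S) h
  calc ∑ W ∈ 𝒲, ((n : ℝ)⁻¹) ^ #W = ((n : ℝ)⁻¹) ^ #S * ∑ T ∈ 𝒲.image (· \ S), ((n : ℝ)⁻¹) ^ #T := by
        rw [sum_image hinj, mul_sum]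
        exact sum_congr rfl fun W hW ↦ by
          rw [← pow_add, add_comm, card_sdiff_add_card_eq_card (hS W hW)]
    _ ≤ ((n : ℝ)⁻¹) ^ #S * (Δ + 1) := by
        gcongr
        refine sum_inv_pow_card_le _ fun T hT ↦ ?_
        obtain ⟨W, hW, rfl⟩ := mem_image.1 hT
        exact (card_le_card sdiff_subset).trans (hΔ W hW)
    _ = (Δ + 1) * ((n : ℝ)⁻¹) ^ #S := mul_comm _ _

variable {n : ℕ}

def vertexFinset (α : Edge n →₀ ℕ) : Finset (Fin n) :=
  α.support.biUnion fun e ↦ {e.val.1, e.val.2}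

lemma coe_vertexFinset (α : Edge n →₀ ℕ) : (vertexFinset α : Set (Fin n)) = vertexSet α := by
  ext k
  simp [vertexFinset, vertexSet, eq_comm]

lemma card_filter_vertexFinset_eq_le {Δ : ℕ} (A : Finset (Edge n →₀ ℕ))
    (hA : ∀ α ∈ A, ∀ e, α e ≤ Δ) (W : Finset (Fin n)) :
    #{α ∈ A | vertexFinset α = W} ≤ (Δ + 1) ^ (#W * #W) := by
  classical
  set s : Finset (Edge n) := {e | e.val.1 ∈ W ∧ e.val.2 ∈ W}
  have hs : #s ≤ #W * #W := by
    rw [← card_product]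
    exact card_le_card_of_injOn (fun e ↦ e.val) (fun e he ↦ by simpa [s] using he)
      Subtype.val_injective.injOn
  refine (card_le_pow_of_support_subset s _ fun α hα ↦
    ⟨fun e he ↦ ?_, hA α (mem_filter.1 hα).1⟩).trans (Nat.pow_le_pow_right (Nat.succ_pos Δ) hs)
  have hW := (mem_filter.1 hα).2
  simp only [s, mem_filter, mem_univ, true_and, ← hW, vertexFinset, mem_biUnion]
  exact ⟨⟨e, he, by simp⟩, ⟨e, he, by simp⟩⟩

lemma sum_inv_pow_card_vertexFinset_le {Δ : ℕ} (S : Finset (Fin n)) (A : Finset (Edge n →₀ ℕ))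
    (hS : ∀ α ∈ A, S ⊆ vertexFinset α) (hdeg : ∀ α ∈ A, expDeg α ≤ Δ)
    (hV : ∀ α ∈ A, #(vertexFinset α) ≤ Δ) :
    ∑ α ∈ A, ((n : ℝ)⁻¹) ^ #(vertexFinset α) ≤
      (Δ + 1) ^ (Δ * Δ) * (Δ + 1) * ((n : ℝ)⁻¹) ^ #S := by
  classical
  have hW : ∀ W ∈ A.image vertexFinset, S ⊆ W ∧ #W ≤ Δ := fun W hW ↦ by
    obtain ⟨α, hα, rfl⟩ := mem_image.1 hW
    exact ⟨hS α hα, hV α hα⟩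
  rw [sum_comp (fun W ↦ ((n : ℝ)⁻¹) ^ #W), mul_assoc]
  calc ∑ W ∈ A.image vertexFinset, #{α ∈ A | vertexFinset α = W} • ((n : ℝ)⁻¹) ^ #W
      ≤ ∑ W ∈ A.image vertexFinset, ((Δ + 1) ^ (Δ * Δ) : ℝ) * ((n : ℝ)⁻¹) ^ #W := by
        refine sum_le_sum fun W hW' ↦ ?_
        rw [nsmul_eq_mul]
        gcongr
        calc (#{α ∈ A | vertexFinset α = W} : ℝ) ≤ ((Δ + 1) ^ (#W * #W) : ℕ) := by
              exact_mod_cast card_filter_vertexFinset_eq_le A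
                (fun α hα e ↦ (Finsupp.le_degree e α).trans (hdeg α hα)) W
          _ ≤ (Δ + 1) ^ (Δ * Δ) := by
              push_cast
              gcongr
              · linarith
              · exact (hW W hW').2
              · exact (hW W hW').2
    _ ≤ (Δ + 1) ^ (Δ * Δ) * ((Δ + 1) * ((n : ℝ)⁻¹) ^ #S) := by
        rw [← mul_sum]
        gcongr
        exact sum_inv_pow_card_le_of_subset S _ (fun W h ↦ (hW W h).1) fun W h ↦ (hW W h).2

end Counting

section MainEstimate

open Finset MeasureTheory ProbabilityTheory

variable {n : ℕ}

lemma abs_integral_evalMat_GOEMeasure_le {Δ : ℕ} (q : LDP n) (hq : q.totalDegree ≤ Δ) :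
    |∫ M, evalMat q M ∂GOEMeasure n| ≤ momentBound Δ ^ Δ *
      ∑ α ∈ q.support with ∀ e, Even (α e), |q.coeff α| * √(n : ℝ)⁻¹ ^ expDeg α := by
  classical
  set P : (Edge n →₀ ℕ) → ℝ := fun α ↦ ∏ e, ∫ x, x ^ α e ∂gaussianReal 0 (n : ℝ≥0)⁻¹
  have heven : ∀ α, P α ≠ 0 → ∀ e, Even (α e) := fun α hP e ↦ by
    by_contra h
    exact hP (prod_eq_zero (mem_univ e)
      (integral_pow_gaussianReal_of_odd _ (Nat.not_even_iff_odd.1 h)))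
  rw [integral_evalMat_GOEMeasure, ← sum_filter_of_ne fun α _ h ↦ heven α (right_ne_zero_of_mul h),
    mul_sum]
  refine (abs_sum_le_sum_abs _ _).trans (sum_le_sum fun α hα ↦ ?_)
  have hP : |P α| ≤ momentBound Δ ^ Δ * √(n : ℝ)⁻¹ ^ expDeg α := by
    have := abs_prod_integral_pow_gaussianReal_le ((n : ℝ≥0)⁻¹) α
      ((MvPolynomial.le_totalDegree (mem_filter.1 hα).1).trans hq)
    rwa [NNReal.coe_inv, NNReal.coe_natCast] at this
  rw [abs_mul, mul_left_comm]
  gcongr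

lemma subset_vertexFinset_of_mem_support_sub_treeProj {p : LDP n} {S : Finset (Fin n)}
    (hS : ContainsSet S p) {α : Edge n →₀ ℕ} (hα : α ∈ (p - treeProj p).support) :
    S ⊆ vertexFinset α := by
  obtain ⟨hp, hnt⟩ := mem_support_sub_treeProj.1 hα
  rcases hS α (MvPolynomial.mem_support_iff.1 hp) with h0 | h
  · exact absurd (h0 ▸ isTree2_zero) hnt
  · rwa [← coe_subset, coe_vertexFinset]

lemma two_mul_card_vertexFinset_le_of_mem_support_sub_treeProj {p : LDP n}
    (hp : ∀ α, p.coeff α ≠ 0 → ConnectedExp α ∨ SplitsIntoConnectedNonTrees α)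
    {α : Edge n →₀ ℕ} (hα : α ∈ (p - treeProj p).support) (heven : ∀ e, Even (α e)) :
    2 * #(vertexFinset α) ≤ expDeg α := by
  obtain ⟨hαp, hnt⟩ := mem_support_sub_treeProj.1 hα
  rw [← Set.ncard_coe_finset, coe_vertexFinset]
  exact two_mul_ncard_vertexSet_le_expDeg heven hnt (hp α (MvPolynomial.mem_support_iff.1 hαp))

lemma sqrt_pow_le_pow {x : ℝ} (hx₀ : 0 ≤ x) (hx₁ : x ≤ 1) {k m : ℕ} (h : 2 * m ≤ k) :
    √x ^ k ≤ x ^ m :=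
  calc √x ^ k ≤ √x ^ (2 * m) := pow_le_pow_of_le_one (Real.sqrt_nonneg x)
        (Real.sqrt_le_one.2 hx₁) h
    _ = x ^ m := by rw [pow_mul, Real.sq_sqrt hx₀]

end MainEstimate

/-- Expectation bound `|E[p(X) - p^Tr(X)]| ≤ c(Δ)‖p‖/n^{|S|}` under GOE. -/
theorem stmt_11 (Δ : ℕ) :
    ∃ c : ℝ, ∀ (n : ℕ) (p : LDP n) (S : Finset (Fin n)),
      p.totalDegree ≤ Δ →
      ContainsSet S p →
      (∀ α : Edge n →₀ ℕ, MvPolynomial.coeff α p ≠ 0 →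
        ConnectedExp α ∨
          ∃ α₁ α₂ : Edge n →₀ ℕ, α = α₁ + α₂ ∧ Disjoint α₁.support α₂.support ∧
            ConnectedExp α₁ ∧ ConnectedExp α₂ ∧ ¬IsTree2 α₁ ∧ ¬IsTree2 α₂) →
      |∫ M, (evalMat p M - evalMat (treeProj p) M) ∂(GOEMeasure n)| ≤
        c * LDPnorm p / (n : ℝ) ^ (S.card : ℕ) := by
  classical
  refine ⟨momentBound Δ ^ Δ * ((Δ + 1) ^ (Δ * Δ) * (Δ + 1)), fun n p S hdeg hS hsplit ↦ ?_⟩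
  set q := p - treeProj p
  set A := q.support.filter fun α ↦ ∀ e, Even (α e)
  have hdegA : ∀ α ∈ A, expDeg α ≤ Δ := fun α hα ↦
    (MvPolynomial.le_totalDegree (Finset.mem_filter.1 hα).1).trans
      ((totalDegree_sub_treeProj_le p).trans hdeg)
  have hVA : ∀ α ∈ A, 2 * (vertexFinset α).card ≤ expDeg α := fun α hα ↦
    two_mul_card_vertexFinset_le_of_mem_support_sub_treeProj hsplit (Finset.mem_filter.1 hα).1
      (Finset.mem_filter.1 hα).2
  have hM : 0 ≤ momentBound Δ ^ Δ := pow_nonneg (zero_le_one.trans (one_le_momentBound Δ)) Δ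
  simp_rw [evalMat, ← map_sub]
  calc _ ≤ momentBound Δ ^ Δ * ∑ α ∈ A, |q.coeff α| * √(n : ℝ)⁻¹ ^ expDeg α :=
        abs_integral_evalMat_GOEMeasure_le q ((totalDegree_sub_treeProj_le p).trans hdeg)
    _ ≤ momentBound Δ ^ Δ * (LDPnorm p * ∑ α ∈ A, ((n : ℝ)⁻¹) ^ (vertexFinset α).card) := by
        refine mul_le_mul_of_nonneg_left ?_ hM
        rw [Finset.mul_sum]
        refine Finset.sum_le_sum fun α hα ↦ mul_le_mul (abs_coeff_sub_treeProj_le p α)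
          (sqrt_pow_le_pow (by positivity) (Nat.cast_inv_le_one n) (hVA α hα)) (by positivity)
          (LDPnorm_nonneg p)
    _ ≤ momentBound Δ ^ Δ * (LDPnorm p * ((Δ + 1) ^ (Δ * Δ) * (Δ + 1) * ((n : ℝ)⁻¹) ^ S.card)) := by
        gcongr
        · exact LDPnorm_nonneg p
        exact sum_inv_pow_card_vertexFinset_le S A
          (fun α hα ↦ subset_vertexFinset_of_mem_support_sub_treeProj hS (Finset.mem_filter.1 hα).1)
          hdegA fun α hα ↦ by have := hVA α hα; have := hdegA α hα; omega
    _ = _ := by rw [inv_pow, div_eq_mul_inv]; ring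
end

section
/- Let β ≥ 1 and u, a, b ∈ ℝ; set v(z) = u + z a + z² b and k(z) = π_β(v(z))². Then there exists a universal constant c such that for every j ∈ {1,2,3,4} and all z, z* ∈ ℝ with |z*| ≤ |z|: |k^{(j)}(z*)| ≤ c β³ Σ |z|^{j₁} |a|^{j₂} |b|^{j₃} |u|^{j₄}, where the sum ranges over all tuples (j₁, j₂, j₃, j₄) of nonnegative integers with each jₛ ≤ 4 + j and j₂ + j₃ ≥ ⌈j/2⌉. -/
/-!
Write `k = F ∘ v` with `F = π_β²` and `v t = u + t a + t² b`. As `v` is quadratic, the chain rule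
expresses `k⁽ʲ⁾` as a combination of the terms `bᵐ F⁽ʲ⁻ᵐ⁾(v) (v')ʲ⁻²ᵐ` with `2m ≤ j`.

`π_β(z) = (s(β(z-1)) + s(β(-z-1)))/β` with `s = log (1 + exp)`, and `s' = σ` is the sigmoid. Every
derivative of `σ` is a polynomial in `σ ∈ [0,1]`, hence bounded, so `|π_β⁽ⁱ⁾| = O(βⁱ⁻¹)` for
`i ≥ 1`, while `|π_β(w)| ≤ 4(1 + |w|)`. By Leibniz, `|F⁽ⁱ⁾(w)| = O(β³ (1 + |w|))` for `1 ≤ i ≤ 4`.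

Finally, for `|z*| ≤ |z|`, the factor `(1 + |v|) |b|ᵐ |v'|ʲ⁻²ᵐ` is dominated by monomials in
`|z|, |a|, |b|, |u|` whose degree in `(|a|, |b|)` is `j - m ≥ ⌈j/2⌉` (or one more), and each of
them occurs in the sum on the right.
-/

open Real Polynomial Finset

noncomputable def sigmoidPoly : ℕ → ℝ[X]
  | 0 => X
  | n + 1 => derivative (sigmoidPoly n) * (X - X ^ 2)

lemma iteratedDeriv_sigmoid (n : ℕ) :
    iteratedDeriv n sigmoid = fun x => (sigmoidPoly n).eval (sigmoid x) := by
  induction n with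
  | zero => simp [sigmoidPoly]
  | succ n ih =>
    rw [iteratedDeriv_succ, ih]
    funext x
    refine (((sigmoidPoly n).hasDerivAt (sigmoid x)).comp x (hasDerivAt_sigmoid x)).deriv.trans ?_
    simp only [sigmoidPoly, eval_mul, eval_sub, eval_X, eval_pow]
    ring

lemma exists_abs_iteratedDeriv_sigmoid_le (N : ℕ) :
    ∃ C, ∀ n ≤ N, ∀ x, |iteratedDeriv n sigmoid x| ≤ C := by
  obtain ⟨C, hC⟩ := isCompact_Icc.exists_bound_of_continuousOn
    (f := fun s => ∑ n ∈ range (N + 1), |(sigmoidPoly n).eval s|) (s := Set.Icc (0 : ℝ) 1)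
    (by fun_prop)
  refine ⟨C, fun n hn x => ?_⟩
  have hx := hC (sigmoid x) ⟨sigmoid_nonneg x, sigmoid_le_one x⟩
  rw [Real.norm_of_nonneg (sum_nonneg fun _ _ => abs_nonneg _)] at hx
  rw [iteratedDeriv_sigmoid]
  exact (single_le_sum (fun i _ => abs_nonneg ((sigmoidPoly i).eval (sigmoid x)))
    (mem_range.2 (Nat.lt_succ_of_le hn))).trans hx

noncomputable def softplus (x : ℝ) : ℝ := log (1 + exp x)

lemma hasDerivAt_softplus (x : ℝ) : HasDerivAt softplus (sigmoid x) x := by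
  have h := ((hasDerivAt_exp x).const_add 1).log (by positivity)
  refine h.congr_deriv ?_
  rw [sigmoid_def, exp_neg]
  field_simp
  ring

@[fun_prop]
lemma contDiff_softplus : ContDiff ℝ ω softplus :=
  (contDiff_const.add contDiff_exp).log fun x => by positivity

lemma softplus_nonneg (x : ℝ) : 0 ≤ softplus x :=
  log_nonneg (by linarith [exp_pos x])

lemma softplus_le (x : ℝ) : softplus x ≤ 1 + |x| := by
  rw [softplus, log_le_iff_le_exp (by positivity), exp_add]
  have h1 : exp x ≤ exp |x| := exp_le_exp.2 (le_abs_self x)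
  have h2 : 1 ≤ exp |x| := one_le_exp (abs_nonneg x)
  nlinarith [exp_one_gt_d9]

lemma iteratedDeriv_succ_softplus (n : ℕ) :
    iteratedDeriv (n + 1) softplus = iteratedDeriv n sigmoid := by
  rw [iteratedDeriv_succ', funext fun x => (hasDerivAt_softplus x).deriv]

lemma pia_eq_softplus (β : ℝ) :
    pia β = fun z => (softplus (β * z - β) + softplus (-β * z - β)) / β := by
  funext z
  simp only [pia, softplus]
  ring_nf

lemma contDiff_pia (β : ℝ) : ContDiff ℝ ω (pia β) := by
  rw [pia_eq_softplus]
  fun_prop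

lemma iteratedDeriv_pia (β : ℝ) (n : ℕ) (z : ℝ) :
    iteratedDeriv n (pia β) z = (β ^ n * iteratedDeriv n softplus (β * z - β) +
      (-β) ^ n * iteratedDeriv n softplus (-β * z - β)) / β := by
  have hf : ContDiff ℝ n fun y => softplus (y - β) :=
    (contDiff_softplus.comp (contDiff_id.sub contDiff_const)).of_le le_top
  have hg (c : ℝ) : ContDiff ℝ n fun z => softplus (c * z - β) :=
    hf.comp (contDiff_const.mul contDiff_id)
  rw [pia_eq_softplus, iteratedDeriv_div_const,
    iteratedDeriv_fun_add (hg β).contDiffAt (hg (-β)).contDiffAt]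
  simp only [iteratedDeriv_comp_const_mul hf (f := fun y => softplus (y - β)),
    iteratedDeriv_comp_sub_const]

lemma abs_iteratedDeriv_succ_pia_le {β C : ℝ} {n : ℕ} (hβ : 0 < β)
    (hC : ∀ x, |iteratedDeriv n sigmoid x| ≤ C) (z : ℝ) :
    |iteratedDeriv (n + 1) (pia β) z| ≤ 2 * C * β ^ n := by
  rw [iteratedDeriv_pia, iteratedDeriv_succ_softplus, abs_div, abs_of_pos hβ, div_le_iff₀ hβ]
  calc _ ≤ |β ^ (n + 1) * iteratedDeriv n sigmoid (β * z - β)| +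
        |(-β) ^ (n + 1) * iteratedDeriv n sigmoid (-β * z - β)| := abs_add_le _ _
    _ = β ^ (n + 1) * (|iteratedDeriv n sigmoid (β * z - β)| +
        |iteratedDeriv n sigmoid (-β * z - β)|) := by
      rw [abs_mul, abs_mul, abs_pow, abs_pow, abs_neg, abs_of_pos hβ]; ring
    _ ≤ β ^ (n + 1) * (C + C) := by gcongr <;> exact hC _
    _ = 2 * C * β ^ n * β := by ring

lemma abs_pia_le {β : ℝ} (hβ : 1 ≤ β) (z : ℝ) : |pia β z| ≤ 4 * (1 + |z|) := by
  have hβ0 : 0 < β := by linarith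
  have h₁ := softplus_le (β * z - β)
  have h₂ := softplus_le (-β * z - β)
  have e₁ : |β * z - β| ≤ β * (|z| + 1) := by
    rw [← mul_sub_one, abs_mul, abs_of_pos hβ0]
    gcongr
    exact (abs_sub _ _).trans (by simp)
  have e₂ : |-β * z - β| ≤ β * (|z| + 1) := by
    rw [show -β * z - β = β * (-z - 1) by ring, abs_mul, abs_of_pos hβ0]
    gcongr
    exact (abs_sub _ _).trans (by simp)
  rw [pia_eq_softplus, abs_div, abs_of_pos hβ0, div_le_iff₀ hβ0,
    abs_of_nonneg (add_nonneg (softplus_nonneg _) (softplus_nonneg _))]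
  nlinarith [abs_nonneg z]

lemma abs_iteratedDeriv_pia_mul_le {β C : ℝ} {N : ℕ} (hβ : 1 ≤ β) (hC0 : 0 ≤ C)
    (hC : ∀ n ≤ N, ∀ x, |iteratedDeriv n sigmoid x| ≤ C) {n i : ℕ} (hn : 1 ≤ n)
    (hnN : n ≤ N + 1) (hi : i ≤ n) (w : ℝ) :
    |iteratedDeriv i (pia β) w| * |iteratedDeriv (n - i) (pia β) w| ≤
      (8 * C + 4 * C ^ 2) * β ^ N * (1 + |w|) := by
  have hd (k : ℕ) (hk : k ≤ N) : |iteratedDeriv (k + 1) (pia β) w| ≤ 2 * C * β ^ k :=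
    abs_iteratedDeriv_succ_pia_le (by linarith) (hC k hk) w
  have hp : |pia β w| * |iteratedDeriv n (pia β) w| ≤
      (8 * C + 4 * C ^ 2) * β ^ N * (1 + |w|) := by
    obtain ⟨k, rfl⟩ : ∃ k, n = k + 1 := ⟨n - 1, by omega⟩
    have : β ^ k ≤ β ^ N := pow_le_pow_right₀ hβ (by omega)
    have : 0 ≤ 4 * C ^ 2 * β ^ N * (1 + |w|) := by positivity
    calc _ ≤ 4 * (1 + |w|) * (2 * C * β ^ k) := by
          gcongr
          exacts [abs_pia_le hβ w, hd k (by omega)]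
      _ ≤ 4 * (1 + |w|) * (2 * C * β ^ N) := by gcongr
      _ ≤ _ := by linarith
  rcases Nat.eq_zero_or_pos i with rfl | hi0
  · simpa using hp
  rcases Nat.eq_zero_or_pos (n - i) with hni | hni
  · obtain rfl : i = n := by omega
    simpa [mul_comm] using hp
  obtain ⟨k, rfl⟩ : ∃ k, i = k + 1 := ⟨i - 1, by omega⟩
  obtain ⟨l, hl⟩ : ∃ l, n - (k + 1) = l + 1 := ⟨n - k - 2, by omega⟩
  rw [hl]
  have hkl : β ^ k * β ^ l ≤ β ^ N := by
    rw [← pow_add]; exact pow_le_pow_right₀ hβ (by omega)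
  calc _ ≤ (2 * C * β ^ k) * (2 * C * β ^ l) := by gcongr <;> apply hd <;> omega
    _ = 4 * C ^ 2 * (β ^ k * β ^ l) := by ring
    _ ≤ 4 * C ^ 2 * β ^ N := by gcongr
    _ ≤ _ := by
      have : 0 ≤ 8 * C * β ^ N * (1 + |w|) := by positivity
      have : 4 * C ^ 2 * β ^ N ≤ 4 * C ^ 2 * β ^ N * (1 + |w|) :=
        le_mul_of_one_le_right (by positivity) (by linarith [abs_nonneg w])
      linarith

lemma exists_abs_iteratedDeriv_pia_sq_le (N : ℕ) :
    ∃ K, ∀ β, 1 ≤ β → ∀ n, 1 ≤ n → n ≤ N + 1 → ∀ w,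
      |iteratedDeriv n (fun w => pia β w ^ 2) w| ≤ K * β ^ N * (1 + |w|) := by
  obtain ⟨C, hC⟩ := exists_abs_iteratedDeriv_sigmoid_le N
  have hC0 : 0 ≤ C := (abs_nonneg _).trans (hC 0 N.zero_le 0)
  refine ⟨2 ^ (N + 1) * (8 * C + 4 * C ^ 2), fun β hβ n hn hnN w => ?_⟩
  have hpia : ContDiffAt ℝ n (pia β) w := ((contDiff_pia β).of_le le_top).contDiffAt
  rw [show (fun w => pia β w ^ 2) = fun w => pia β w * pia β w by simp only [sq],
    iteratedDeriv_fun_mul hpia hpia]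
  calc _ ≤ ∑ i ∈ range (n + 1), |(n.choose i : ℝ) * iteratedDeriv i (pia β) w *
        iteratedDeriv (n - i) (pia β) w| := abs_sum_le_sum_abs _ _
    _ ≤ ∑ i ∈ range (n + 1), (n.choose i : ℝ) * ((8 * C + 4 * C ^ 2) * β ^ N * (1 + |w|)) := by
      gcongr with i hi
      rw [abs_mul, abs_mul, Nat.abs_cast, mul_assoc]
      exact mul_le_mul_of_nonneg_left (abs_iteratedDeriv_pia_mul_le hβ hC0 hC hn hnN
        (Nat.lt_succ_iff.1 (mem_range.1 hi)) w) (by positivity)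
    _ = 2 ^ n * ((8 * C + 4 * C ^ 2) * β ^ N * (1 + |w|)) := by
      rw [← sum_mul, ← Nat.cast_sum, Nat.sum_range_choose]; push_cast; ring
    _ ≤ _ := by
      simp only [← mul_assoc]
      gcongr
      norm_num

def admissibleSum (j : ℕ) (z a b u : ℝ) : ℝ :=
  ∑ j1 ∈ range (4 + j + 1), ∑ j2 ∈ range (4 + j + 1), ∑ j3 ∈ range (4 + j + 1),
    ∑ j4 ∈ range (4 + j + 1),
      if (j + 1) / 2 ≤ j2 + j3 then z ^ j1 * a ^ j2 * b ^ j3 * u ^ j4 else 0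

section admissibleSum

variable {j : ℕ} {z a b u : ℝ}

lemma admissibleSum_nonneg (hz : 0 ≤ z) (ha : 0 ≤ a) (hb : 0 ≤ b) (hu : 0 ≤ u) :
    0 ≤ admissibleSum j z a b u := by
  unfold admissibleSum; positivity

lemma monomial_le_admissibleSum (hz : 0 ≤ z) (ha : 0 ≤ a) (hb : 0 ≤ b) (hu : 0 ≤ u)
    {e₁ e₂ e₃ e₄ : ℕ} (h₁ : e₁ ≤ 4 + j) (h₂ : e₂ ≤ 4 + j) (h₃ : e₃ ≤ 4 + j) (h₄ : e₄ ≤ 4 + j)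
    (hdeg : (j + 1) / 2 ≤ e₂ + e₃) :
    z ^ e₁ * a ^ e₂ * b ^ e₃ * u ^ e₄ ≤ admissibleSum j z a b u := by
  have mem {e : ℕ} (he : e ≤ 4 + j) : e ∈ range (4 + j + 1) := mem_range.2 (by omega)
  unfold admissibleSum
  refine le_trans ?_ (single_le_sum (fun _ _ => by positivity) (mem h₁))
  refine le_trans ?_ (single_le_sum (fun _ _ => by positivity) (mem h₂))
  refine le_trans ?_ (single_le_sum (fun _ _ => by positivity) (mem h₃))
  refine le_trans ?_ (single_le_sum (fun _ _ => by positivity) (mem h₄))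
  rw [if_pos hdeg]

lemma exists_add_pow_le_two_pow_mul {x y : ℝ} (hx : 0 ≤ x) (hy : 0 ≤ y) (n : ℕ) :
    ∃ e ≤ n, (x + y) ^ n ≤ 2 ^ n * (x ^ e * y ^ (n - e)) := by
  rcases le_total x y with hxy | hxy
  · refine ⟨0, n.zero_le, ?_⟩
    calc (x + y) ^ n ≤ (2 * y) ^ n := by gcongr; linarith
      _ = _ := by rw [mul_pow]; simp
  · refine ⟨n, le_rfl, ?_⟩
    calc (x + y) ^ n ≤ (2 * x) ^ n := by gcongr; linarith
      _ = _ := by rw [mul_pow]; simp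

lemma mul_pow_le_admissibleSum (hz : 0 ≤ z) (ha : 0 ≤ a) (hb : 0 ≤ b) (hu : 0 ≤ u)
    {k d : ℕ} (hk : k ≤ 4 + j) (hd : (j + 1) / 2 ≤ d) (hd' : d ≤ 4 + j) :
    (1 + u) * (1 + z) ^ k * (a + b) ^ d ≤ 2 ^ (1 + k + d) * admissibleSum j z a b u := by
  obtain ⟨e₄, he₄, hU⟩ := exists_add_pow_le_two_pow_mul hu zero_le_one 1
  obtain ⟨e₁, he₁, hZ⟩ := exists_add_pow_le_two_pow_mul hz zero_le_one k
  obtain ⟨e₂, he₂, hAB⟩ := exists_add_pow_le_two_pow_mul ha hb d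
  rw [add_comm 1 u, ← pow_one (u + 1), add_comm 1 z]
  calc (u + 1) ^ 1 * (z + 1) ^ k * (a + b) ^ d
      ≤ 2 ^ 1 * (u ^ e₄ * 1 ^ (1 - e₄)) * (2 ^ k * (z ^ e₁ * 1 ^ (k - e₁))) *
          (2 ^ d * (a ^ e₂ * b ^ (d - e₂))) := by gcongr
    _ = 2 ^ (1 + k + d) * (z ^ e₁ * a ^ e₂ * b ^ (d - e₂) * u ^ e₄) := by
      simp only [one_pow, mul_one, pow_add]; ring
    _ ≤ _ := by
      gcongr
      exact monomial_le_admissibleSum hz ha hb hu (by omega) (by omega) (by omega) (by omega)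
        (by omega)

lemma weight_le_admissibleSum (hz : 0 ≤ z) (ha : 0 ≤ a) (hb : 0 ≤ b) (hu : 0 ≤ u)
    {m p : ℕ} (hj : p + 2 * m = j) :
    (1 + u + z * a + z ^ 2 * b) * b ^ m * (a + 2 * z * b) ^ p ≤
      8 ^ (j + 2) * admissibleSum j z a b u := by
  have hS := admissibleSum_nonneg (j := j) hz ha hb hu
  have hv : 1 + u + z * a + z ^ 2 * b ≤ (1 + u) * (1 + z) ^ 2 * (1 + (a + b)) := by
    have : 0 ≤ (1 + u) * (1 + z) ^ 2 * (1 + (a + b)) - (1 + u + z * a + z ^ 2 * b) := by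
      ring_nf; positivity
    linarith
  have hw : b ^ m * (a + 2 * z * b) ^ p ≤ 2 ^ p * (1 + z) ^ p * (a + b) ^ (p + m) := by
    calc b ^ m * (a + 2 * z * b) ^ p ≤ (a + b) ^ m * (2 * (1 + z) * (a + b)) ^ p := by
          gcongr
          · linarith
          · nlinarith
      _ = _ := by rw [mul_pow, mul_pow, pow_add]; ring
  have h₁ := mul_pow_le_admissibleSum (j := j) (k := p + 2) (d := p + m) hz ha hb hu
    (by omega) (by omega) (by omega)
  have h₂ := mul_pow_le_admissibleSum (j := j) (k := p + 2) (d := p + m + 1) hz ha hb hu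
    (by omega) (by omega) (by omega)
  calc (1 + u + z * a + z ^ 2 * b) * b ^ m * (a + 2 * z * b) ^ p
      ≤ ((1 + u) * (1 + z) ^ 2 * (1 + (a + b))) * (2 ^ p * (1 + z) ^ p * (a + b) ^ (p + m)) := by
        rw [mul_assoc]; gcongr
    _ = 2 ^ p * ((1 + u) * (1 + z) ^ (p + 2) * (a + b) ^ (p + m) +
          (1 + u) * (1 + z) ^ (p + 2) * (a + b) ^ (p + m + 1)) := by ring
    _ ≤ 2 ^ p * (2 ^ (1 + (p + 2) + (p + m)) * admissibleSum j z a b u +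
          2 ^ (1 + (p + 2) + (p + m + 1)) * admissibleSum j z a b u) := by gcongr
    _ ≤ 2 ^ p * (2 * 2 ^ (1 + (p + 2) + (p + m + 1)) * admissibleSum j z a b u) := by
      have : (2 : ℝ) ^ (1 + (p + 2) + (p + m)) ≤ 2 ^ (1 + (p + 2) + (p + m + 1)) :=
        pow_le_pow_right₀ (by norm_num) (by omega)
      gcongr 2 ^ p * ?_
      nlinarith
    _ = 2 ^ (3 * p + m + 5) * admissibleSum j z a b u := by ring
    _ ≤ 8 ^ (j + 2) * admissibleSum j z a b u := by
      rw [show (8 : ℝ) = 2 ^ 3 by norm_num, ← pow_mul]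
      gcongr
      · norm_num
      · omega

end admissibleSum

section QuadraticComposition

variable {F : ℝ → ℝ} {u a b : ℝ}

noncomputable def quadTerm (F : ℝ → ℝ) (u a b : ℝ) (i p : ℕ) (t : ℝ) : ℝ :=
  iteratedDeriv i F (u + t * a + t ^ 2 * b) * (a + 2 * t * b) ^ p

lemma quadTerm_zero_zero (F : ℝ → ℝ) (u a b : ℝ) :
    quadTerm F u a b 0 0 = fun t => F (u + t * a + t ^ 2 * b) := by
  funext t; simp [quadTerm]

lemma hasDerivAt_quadTerm (hF : ContDiff ℝ 4 F) {i : ℕ} (hi : i < 4) (p : ℕ) (t : ℝ) :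
    HasDerivAt (quadTerm F u a b i p)
      (quadTerm F u a b (i + 1) (p + 1) t + 2 * p * b * quadTerm F u a b i (p - 1) t) t := by
  -- at `p = 0` the truncated `p - 1` is harmless, its coefficient vanishes
  have hv : HasDerivAt (fun t => u + t * a + t ^ 2 * b) (a + 2 * t * b) t := by
    refine ((((hasDerivAt_id t).mul_const a).const_add u).add
      ((hasDerivAt_pow 2 t).mul_const b)).congr_deriv ?_
    norm_num
  have hw : HasDerivAt (fun t => a + 2 * t * b) (2 * b) t := by
    refine ((((hasDerivAt_id t).const_mul 2).mul_const b).const_add a).congr_deriv ?_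
    ring
  have hFi (w : ℝ) : HasDerivAt (iteratedDeriv i F) (iteratedDeriv (i + 1) F w) w := by
    rw [iteratedDeriv_succ]
    exact ((hF.differentiable_iteratedDeriv i (by exact_mod_cast hi)) w).hasDerivAt
  refine (((hFi _).comp t hv).mul (hw.pow p)).congr_deriv ?_
  simp only [quadTerm, Function.comp_apply, Pi.pow_apply]
  rcases p with _ | p
  · simp
  · simp only [Nat.add_sub_cancel]; push_cast; ring

lemma iteratedDeriv_one_comp_quadratic (hF : ContDiff ℝ 4 F) :
    iteratedDeriv 1 (fun t => F (u + t * a + t ^ 2 * b)) = quadTerm F u a b 1 1 := by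
  rw [iteratedDeriv_one, ← quadTerm_zero_zero]
  funext t
  refine (hasDerivAt_quadTerm hF (by norm_num) 0 t).deriv.trans ?_
  simp

lemma iteratedDeriv_two_comp_quadratic (hF : ContDiff ℝ 4 F) :
    iteratedDeriv 2 (fun t => F (u + t * a + t ^ 2 * b)) =
      fun t => quadTerm F u a b 2 2 t + 2 * b * quadTerm F u a b 1 0 t := by
  rw [iteratedDeriv_succ, iteratedDeriv_one_comp_quadratic hF]
  funext t
  refine (hasDerivAt_quadTerm hF (by norm_num) 1 t).deriv.trans ?_
  norm_num

lemma iteratedDeriv_three_comp_quadratic (hF : ContDiff ℝ 4 F) :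
    iteratedDeriv 3 (fun t => F (u + t * a + t ^ 2 * b)) =
      fun t => quadTerm F u a b 3 3 t + 6 * b * quadTerm F u a b 2 1 t := by
  rw [iteratedDeriv_succ, iteratedDeriv_two_comp_quadratic hF]
  funext t
  refine (((hasDerivAt_quadTerm hF (by norm_num) 2 t).add
    ((hasDerivAt_quadTerm hF (by norm_num) 0 t).const_mul (2 * b))).deriv).trans ?_
  norm_num; ring

lemma iteratedDeriv_four_comp_quadratic (hF : ContDiff ℝ 4 F) :
    iteratedDeriv 4 (fun t => F (u + t * a + t ^ 2 * b)) =
      fun t => quadTerm F u a b 4 4 t + 12 * b * quadTerm F u a b 3 2 t +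
        12 * b ^ 2 * quadTerm F u a b 2 0 t := by
  rw [iteratedDeriv_succ, iteratedDeriv_three_comp_quadratic hF]
  funext t
  refine (((hasDerivAt_quadTerm hF (by norm_num) 3 t).add
    ((hasDerivAt_quadTerm hF (by norm_num) 1 t).const_mul (6 * b))).deriv).trans ?_
  norm_num; ring

variable {K : ℝ}

lemma abs_quadTerm_le {i : ℕ} (hK : ∀ w, |iteratedDeriv i F w| ≤ K * (1 + |w|)) {z t : ℝ}
    (ht : |t| ≤ |z|) {j m p : ℕ} (hj : p + 2 * m = j) :
    |b| ^ m * |quadTerm F u a b i p t| ≤ 8 ^ (j + 2) * K * admissibleSum j |z| |a| |b| |u| := by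
  have hK0 : 0 ≤ K := by simpa using (abs_nonneg _).trans (hK 0)
  have hv : |u + t * a + t ^ 2 * b| ≤ |u| + |z| * |a| + |z| ^ 2 * |b| := by
    calc _ ≤ |u| + |t| * |a| + |t| ^ 2 * |b| := by
          have := abs_add_three u (t * a) (t ^ 2 * b)
          rwa [abs_mul, abs_mul, abs_pow] at this
      _ ≤ _ := by gcongr
  have hw : |a + 2 * t * b| ≤ |a| + 2 * |z| * |b| := by
    calc _ ≤ |a| + 2 * |t| * |b| := by
          simpa only [abs_mul, abs_two] using abs_add_le a (2 * t * b)
      _ ≤ _ := by gcongr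
  calc |b| ^ m * |quadTerm F u a b i p t|
      = |b| ^ m * (|iteratedDeriv i F (u + t * a + t ^ 2 * b)| * |a + 2 * t * b| ^ p) := by
        rw [quadTerm, abs_mul, abs_pow]
    _ ≤ |b| ^ m * (K * (1 + (|u| + |z| * |a| + |z| ^ 2 * |b|)) *
          (|a| + 2 * |z| * |b|) ^ p) := by
        gcongr
        exact (hK _).trans (by gcongr)
    _ = K * ((1 + |u| + |z| * |a| + |z| ^ 2 * |b|) * |b| ^ m * (|a| + 2 * |z| * |b|) ^ p) := by
        ring
    _ ≤ K * (8 ^ (j + 2) * admissibleSum j |z| |a| |b| |u|) :=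
        mul_le_mul_of_nonneg_left (weight_le_admissibleSum (abs_nonneg _) (abs_nonneg _)
          (abs_nonneg _) (abs_nonneg _) hj) hK0
    _ = _ := by ring

lemma abs_iteratedDeriv_comp_quadratic_le (hF : ContDiff ℝ 4 F)
    (hK : ∀ i, 1 ≤ i → i ≤ 4 → ∀ w, |iteratedDeriv i F w| ≤ K * (1 + |w|))
    {j : ℕ} (hj : j ∈ ({1, 2, 3, 4} : Finset ℕ)) {z t : ℝ} (ht : |t| ≤ |z|) :
    |iteratedDeriv j (fun t => F (u + t * a + t ^ 2 * b)) t| ≤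
      25 * 8 ^ 6 * K * admissibleSum j |z| |a| |b| |u| := by
  have hK0 : 0 ≤ K := by simpa using (abs_nonneg _).trans (hK 1 le_rfl (by norm_num) 0)
  have hT {i m p : ℕ} (hi : 1 ≤ i) (hi' : i ≤ 4) (hjmp : p + 2 * m = j) :=
    abs_quadTerm_le (u := u) (a := a) (b := b) (hK i hi hi') ht hjmp
  have hKS : 0 ≤ K * admissibleSum j |z| |a| |b| |u| := mul_nonneg hK0
    (admissibleSum_nonneg (abs_nonneg z) (abs_nonneg a) (abs_nonneg b) (abs_nonneg u))
  simp only [Finset.mem_insert, Finset.mem_singleton] at hj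
  rcases hj with rfl | rfl | rfl | rfl
  · have h₁ := hT (m := 0) (p := 1) (i := 1) le_rfl (by norm_num) rfl
    rw [iteratedDeriv_one_comp_quadratic hF]
    norm_num at h₁ ⊢
    linarith
  · have h₁ := hT (m := 0) (p := 2) (i := 2) (by norm_num) (by norm_num) rfl
    have h₂ := hT (m := 1) (p := 0) (i := 1) le_rfl (by norm_num) rfl
    rw [iteratedDeriv_two_comp_quadratic hF]
    calc _ ≤ _ := abs_add_le _ _
      _ = |b| ^ 0 * |quadTerm F u a b 2 2 t| + 2 * (|b| ^ 1 * |quadTerm F u a b 1 0 t|) := by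
        simp [abs_mul]; ring
      _ ≤ _ := by norm_num at h₁ h₂ ⊢; linarith
  · have h₁ := hT (m := 0) (p := 3) (i := 3) (by norm_num) (by norm_num) rfl
    have h₂ := hT (m := 1) (p := 1) (i := 2) (by norm_num) (by norm_num) rfl
    rw [iteratedDeriv_three_comp_quadratic hF]
    calc _ ≤ _ := abs_add_le _ _
      _ = |b| ^ 0 * |quadTerm F u a b 3 3 t| + 6 * (|b| ^ 1 * |quadTerm F u a b 2 1 t|) := by
        simp [abs_mul]; ring
      _ ≤ _ := by norm_num at h₁ h₂ ⊢; linarith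
  · have h₁ := hT (m := 0) (p := 4) (i := 4) (by norm_num) (by norm_num) rfl
    have h₂ := hT (m := 1) (p := 2) (i := 3) (by norm_num) (by norm_num) rfl
    have h₃ := hT (m := 2) (p := 0) (i := 2) (by norm_num) (by norm_num) rfl
    rw [iteratedDeriv_four_comp_quadratic hF]
    calc _ ≤ _ := abs_add_three _ _ _
      _ = |b| ^ 0 * |quadTerm F u a b 4 4 t| + 12 * (|b| ^ 1 * |quadTerm F u a b 3 2 t|) +
          12 * (|b| ^ 2 * |quadTerm F u a b 2 0 t|) := by
        simp [abs_mul]; ring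
      _ ≤ _ := by norm_num at h₁ h₂ h₃ ⊢; linarith

end QuadraticComposition

/-- Derivative bounds for `k(z) = π_β(u + za + z²b)²`. -/
theorem stmt_14 :
    ∃ c : ℝ, ∀ β u a b : ℝ, 1 ≤ β →
      ∀ j ∈ ({1, 2, 3, 4} : Finset ℕ), ∀ z zs : ℝ, |zs| ≤ |z| →
        |iteratedDeriv j (fun t : ℝ => pia β (u + t * a + t ^ 2 * b) ^ 2) zs| ≤
          c * β ^ 3 *
            ∑ j1 ∈ Finset.range (4 + j + 1), ∑ j2 ∈ Finset.range (4 + j + 1),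
              ∑ j3 ∈ Finset.range (4 + j + 1), ∑ j4 ∈ Finset.range (4 + j + 1),
                if (j + 1) / 2 ≤ j2 + j3 then
                  |z| ^ j1 * |a| ^ j2 * |b| ^ j3 * |u| ^ j4
                else 0 := by
  obtain ⟨K, hK⟩ := exists_abs_iteratedDeriv_pia_sq_le 3
  refine ⟨25 * 8 ^ 6 * K, fun β u a b hβ j hj z zs hzs => ?_⟩
  have hF : ContDiff ℝ 4 fun w => pia β w ^ 2 := ((contDiff_pia β).pow 2).of_le le_top
  calc _ ≤ 25 * 8 ^ 6 * (K * β ^ 3) * admissibleSum j |z| |a| |b| |u| :=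
        abs_iteratedDeriv_comp_quadratic_le hF (fun i hi hi' => hK β hβ i hi hi') hj hzs
    _ = _ := by rw [admissibleSum]; ring
end
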